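/- A connected graph G of order n ≥ 2 has partition dimension 2 if and only if G is a path. -/

import Mathlib

open SimpleGraph Finset

variable {V : Type*}

/-- A vertex `x` resolves the pair `u, v` if it is at different distances from them. -/
def IsResolvingSet (G : SimpleGraph V) (S : Set V) : Prop :=
  ∀ u v : V, u ≠ v → ∃ x ∈ S, G.dist u x ≠ G.dist v x

/-- The metric dimension: minimum cardinality of a resolving set. -/
noncomputable def metricDim (G : SimpleGraph V) [Fintype V] : ℕ :=
  sInf {n | ∃ S : Finset V, S.card = n ∧ IsResolvingSet G ↑S}

/-- `w` strongly resolves `u, v`. -/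
def StronglyResolves (G : SimpleGraph V) (w u v : V) : Prop :=
  G.dist w u = G.dist w v + G.dist v u ∨ G.dist w v = G.dist w u + G.dist u v

def IsStrongResolvingSet (G : SimpleGraph V) (S : Set V) : Prop :=
  ∀ u v : V, u ≠ v → ∃ w ∈ S, StronglyResolves G w u v

noncomputable def strongMetricDim (G : SimpleGraph V) [Fintype V] : ℕ :=
  sInf {n | ∃ S : Finset V, S.card = n ∧ IsStrongResolvingSet G ↑S}

/-- `u` is maximally distant from `v`. -/
def MaxDistant (G : SimpleGraph V) (u v : V) : Prop :=
  ∀ w : V, G.Adj u w → G.dist v w ≤ G.dist v u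

def MutuallyMaxDistant (G : SimpleGraph V) (u v : V) : Prop :=
  MaxDistant G u v ∧ MaxDistant G v u

/-- The strong resolving graph of `G`. -/
def strongResolvingGraph (G : SimpleGraph V) : SimpleGraph V where
  Adj u v := u ≠ v ∧ MutuallyMaxDistant G u v
  symm := by
    constructor
    intro u v h
    exact ⟨h.1.symm, h.2.2, h.2.1⟩
  loopless := by
    constructor
    intro u h
    exact h.1 rfl

def IsVertexCover (H : SimpleGraph V) (S : Set V) : Prop :=
  ∀ u v : V, H.Adj u v → u ∈ S ∨ v ∈ S

noncomputable def vertexCoverNum (H : SimpleGraph V) [Fintype V] : ℕ :=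
  sInf {n | ∃ S : Finset V, S.card = n ∧ _root_.IsVertexCover H ↑S}

def IsLocalResolvingSet (G : SimpleGraph V) (S : Set V) : Prop :=
  ∀ u v : V, G.Adj u v → ∃ x ∈ S, G.dist u x ≠ G.dist v x

noncomputable def localMetricDim (G : SimpleGraph V) [Fintype V] : ℕ :=
  sInf {n | ∃ S : Finset V, S.card = n ∧ IsLocalResolvingSet G ↑S}

def IsIndepVertexSet (G : SimpleGraph V) (S : Set V) : Prop :=
  S.Pairwise fun u v => ¬ G.Adj u v

noncomputable def indepNum (G : SimpleGraph V) [Fintype V] : ℕ :=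
  sSup {n | ∃ S : Finset V, S.card = n ∧ IsIndepVertexSet G ↑S}

def IsAdjResolvingSet (G : SimpleGraph V) (S : Set V) : Prop :=
  ∀ x y : V, x ≠ y → x ∉ S → y ∉ S →
    ∃ s ∈ S, (G.Adj s x ∧ ¬ G.Adj s y) ∨ (¬ G.Adj s x ∧ G.Adj s y)

noncomputable def adjDim (G : SimpleGraph V) [Fintype V] : ℕ :=
  sInf {n | ∃ S : Finset V, S.card = n ∧ IsAdjResolvingSet G ↑S}

def IsKResolvingSet (G : SimpleGraph V) (k : ℕ) (S : Finset V) : Prop :=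
  ∀ x y : V, x ≠ y → k ≤ (S.filter fun w => G.dist x w ≠ G.dist y w).card

noncomputable def kMetricDim (G : SimpleGraph V) [Fintype V] (k : ℕ) : ℕ :=
  sInf {n | ∃ S : Finset V, S.card = n ∧ IsKResolvingSet G k S}

def IsKMetricDimensional (G : SimpleGraph V) (k : ℕ) : Prop :=
  (∃ S : Finset V, IsKResolvingSet G k S) ∧
    ∀ j : ℕ, (∃ S : Finset V, IsKResolvingSet G j S) → j ≤ k

/-- distance from a vertex to a finite set of vertices -/
noncomputable def fsetDist (G : SimpleGraph V) (v : V) (P : Finset V) : ℕ :=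
  sInf {d | ∃ w ∈ P, G.dist v w = d}

def IsResolvingPartition [Fintype V] [DecidableEq V] (G : SimpleGraph V)
    (Pt : Finpartition (Finset.univ : Finset V)) : Prop :=
  ∀ u v : V, u ≠ v → ∃ P ∈ Pt.parts, fsetDist G u P ≠ fsetDist G v P

noncomputable def partitionDim (G : SimpleGraph V) [Fintype V] [DecidableEq V] : ℕ :=
  sInf {n | ∃ Pt : Finpartition (Finset.univ : Finset V), Pt.parts.card = n ∧ IsResolvingPartition G Pt}

def SetStronglyResolves (G : SimpleGraph V) (W : Finset V) (x y : V) : Prop :=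
  x ∉ W ∧ y ∉ W ∧
    (fsetDist G x W = G.dist x y + fsetDist G y W ∨
      fsetDist G y W = G.dist y x + fsetDist G x W)

def IsStrongResolvingPartition [Fintype V] [DecidableEq V] (G : SimpleGraph V)
    (Pt : Finpartition (Finset.univ : Finset V)) : Prop :=
  ∀ Q ∈ Pt.parts, ∀ x ∈ Q, ∀ y ∈ Q, x ≠ y →
    ∃ P ∈ Pt.parts, SetStronglyResolves G P x y

noncomputable def strongPartitionDim (G : SimpleGraph V) [Fintype V] [DecidableEq V] : ℕ :=
  sInf {n | ∃ Pt : Finpartition (Finset.univ : Finset V),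
    Pt.parts.card = n ∧ IsStrongResolvingPartition G Pt}

/-- distance from an edge (as an unordered pair) to a vertex -/
noncomputable def edgeDist (G : SimpleGraph V) (e : Sym2 V) (v : V) : ℕ :=
  Sym2.lift ⟨fun a b => min (G.dist a v) (G.dist b v), fun a b => min_comm _ _⟩ e

def IsEdgeResolvingSet (G : SimpleGraph V) (S : Set V) : Prop :=
  ∀ e ∈ G.edgeSet, ∀ f ∈ G.edgeSet, e ≠ f → ∃ x ∈ S, edgeDist G e x ≠ edgeDist G f x

noncomputable def edgeMetricDim (G : SimpleGraph V) [Fintype V] : ℕ :=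
  sInf {n | ∃ S : Finset V, S.card = n ∧ IsEdgeResolvingSet G ↑S}

noncomputable def Rset (G : SimpleGraph V) [Fintype V] (x y : V) : Finset V :=
  Finset.univ.filter fun w => G.dist x w ≠ G.dist y w

def IsResolvingFunction (G : SimpleGraph V) [Fintype V] (f : V → ℝ) : Prop :=
  (∀ v : V, 0 ≤ f v ∧ f v ≤ 1) ∧
    ∀ x y : V, x ≠ y → 1 ≤ ∑ w ∈ Rset G x y, f w

noncomputable def fracMetricDim (G : SimpleGraph V) [Fintype V] : ℝ :=
  sInf {t : ℝ | ∃ f : V → ℝ, IsResolvingFunction G f ∧ t = ∑ v, f v}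

def AreTwins (G : SimpleGraph V) (u v : V) : Prop :=
  u ≠ v ∧ (G.neighborSet u = G.neighborSet v ∨
    insert u (G.neighborSet u) = insert v (G.neighborSet v))

noncomputable def graphDiam (G : SimpleGraph V) : ℕ :=
  sSup (Set.range fun p : V × V => G.dist p.1 p.2)

/-!
If `{A, B}` is a resolving partition of a connected graph, then `v ↦ d(v, B)` is injective on `A`.
Along a geodesic towards `B` it drops by exactly one at each step, so it takes exactly the values
`1, …, |A|`, and two vertices of `A` are adjacent iff their values differ by one. The same holds
for `B`, and the only edge between `A` and `B` joins the two vertices at distance `1` from the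
other part. Listing `A` by decreasing and then `B` by increasing distance to the other part lays
`G` out as a path. Conversely, an end vertex `x` of a path resolves it, so `{{x}, V ∖ {x}}` is a
resolving partition, while a partition with a single part resolves no pair of vertices.
-/

namespace SimpleGraph

variable {W : Type*} {G : SimpleGraph V} {H : SimpleGraph W} {u v : V}

lemma dist_map_le_of_reachable (f : G →g H) (h : G.Reachable u v) :
    H.dist (f u) (f v) ≤ G.dist u v := by
  obtain ⟨p, hp⟩ := h.exists_walk_length_eq_dist
  exact (dist_le (p.map f)).trans_eq (by rw [Walk.length_map, hp])

lemma Iso.dist_apply (e : G ≃g H) (u v : V) : H.dist (e u) (e v) = G.dist u v := by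
  by_cases h : G.Reachable u v
  · refine le_antisymm (dist_map_le_of_reachable e.toHom h) ?_
    simpa using dist_map_le_of_reachable e.symm.toHom (h.map e.toHom)
  · have h' : ¬H.Reachable (e u) (e v) := fun h' => h (by simpa using h'.map e.symm.toHom)
    rw [dist_eq_zero_of_not_reachable h, dist_eq_zero_of_not_reachable h']

lemma val_le_val_add_length_of_walk_pathGraph {n : ℕ} {i j : Fin n} (p : (pathGraph n).Walk i j) :
    (j : ℕ) ≤ i + p.length := by
  induction p with
  | nil => simp
  | cons h _ ih =>
    rw [pathGraph_adj] at h
    rw [Walk.length_cons]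
    omega

lemma pathGraph_dist_zero_left {n : ℕ} (hn : 0 < n) (i : Fin n) :
    (pathGraph n).dist ⟨0, hn⟩ i = i := by
  refine le_antisymm ?_ ?_
  · obtain ⟨i, hi⟩ := i
    induction i with
    | zero => simp
    | succ k ih =>
      have hadj : (pathGraph n).Adj ⟨k, by omega⟩ ⟨k + 1, hi⟩ := pathGraph_adj.mpr (Or.inl rfl)
      calc (pathGraph n).dist ⟨0, hn⟩ ⟨k + 1, hi⟩
          ≤ (pathGraph n).dist ⟨0, hn⟩ ⟨k, by omega⟩ + (pathGraph n).dist ⟨k, by omega⟩ ⟨k + 1, hi⟩ :=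
            hadj.reachable.dist_triangle_right _
        _ ≤ k + 1 := by rw [dist_eq_one_iff_adj.mpr hadj]; exact Nat.add_le_add_right (ih _) 1
  · obtain ⟨p, hp⟩ := (pathGraph_preconnected n ⟨0, hn⟩ i).exists_walk_length_eq_dist
    simpa [hp] using val_le_val_add_length_of_walk_pathGraph p

lemma nonempty_iso_pathGraph_of_adj_iff [Fintype V] (φ : V → ℕ) (hφ : φ.Injective)
    (hlt : ∀ v, φ v < Fintype.card V)
    (hadj : ∀ u v, G.Adj u v ↔ φ u + 1 = φ v ∨ φ v + 1 = φ u) :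
    Nonempty (G ≃g pathGraph (Fintype.card V)) := by
  let ψ : V → Fin (Fintype.card V) := fun v => ⟨φ v, hlt v⟩
  have hψ : ψ.Bijective := (Fintype.bijective_iff_injective_and_card ψ).mpr
    ⟨fun u v h => hφ (congrArg Fin.val h), by simp⟩
  exact ⟨⟨Equiv.ofBijective ψ hψ, fun {u v} => by simp [ψ, pathGraph_adj, hadj]⟩⟩

end SimpleGraph

section fsetDist

variable {G : SimpleGraph V} {P : Finset V} {u v w : V}

lemma exists_mem_dist_eq_fsetDist (hP : P.Nonempty) (v : V) :
    ∃ w ∈ P, G.dist v w = fsetDist G v P := by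
  obtain ⟨w, hw⟩ := hP
  exact Nat.sInf_mem (s := {d | ∃ w ∈ P, G.dist v w = d}) ⟨G.dist v w, w, hw, rfl⟩

lemma fsetDist_le_dist (hw : w ∈ P) : fsetDist G v P ≤ G.dist v w :=
  Nat.sInf_le ⟨w, hw, rfl⟩

lemma fsetDist_eq_zero_of_mem (hv : v ∈ P) : fsetDist G v P = 0 :=
  Nat.le_zero.mp <| (fsetDist_le_dist hv).trans_eq dist_self

lemma fsetDist_singleton (G : SimpleGraph V) (v w : V) : fsetDist G v {w} = G.dist v w := by
  obtain ⟨w', hw', hd⟩ := exists_mem_dist_eq_fsetDist (G := G) (singleton_nonempty w) v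
  rw [← hd, mem_singleton.mp hw']

lemma fsetDist_pos (hG : G.Connected) (hP : P.Nonempty) (hv : v ∉ P) : 0 < fsetDist G v P := by
  refine Nat.pos_of_ne_zero fun h => hv ?_
  obtain ⟨w, hw, hd⟩ := exists_mem_dist_eq_fsetDist (G := G) hP v
  rwa [hG.dist_eq_zero_iff.mp (hd.trans h)]

lemma fsetDist_le_fsetDist_add_one (h : G.Adj u v) : fsetDist G v P ≤ fsetDist G u P + 1 := by
  rcases P.eq_empty_or_nonempty with rfl | hP
  · simp [fsetDist]
  obtain ⟨w, hw, hd⟩ := exists_mem_dist_eq_fsetDist (G := G) hP u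
  calc fsetDist G v P ≤ G.dist v w := fsetDist_le_dist hw
    _ ≤ G.dist v u + G.dist u w := h.symm.reachable.dist_triangle_left w
    _ = fsetDist G u P + 1 := by rw [hd, dist_eq_one_iff_adj.mpr h.symm, add_comm]

lemma fsetDist_eq_one_of_adj (hG : G.Connected) (h : G.Adj v w) (hv : v ∉ P) (hw : w ∈ P) :
    fsetDist G v P = 1 :=
  le_antisymm ((fsetDist_le_dist hw).trans_eq (dist_eq_one_iff_adj.mpr h))
    (fsetDist_pos hG ⟨w, hw⟩ hv)

lemma exists_adj_fsetDist_add_one_eq (hG : G.Connected) (hP : P.Nonempty) (hv : v ∉ P) :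
    ∃ u, G.Adj v u ∧ fsetDist G u P + 1 = fsetDist G v P := by
  obtain ⟨w, hw, hd⟩ := exists_mem_dist_eq_fsetDist (G := G) hP v
  obtain ⟨p, hp⟩ := hG.exists_walk_length_eq_dist v w
  cases p with
  | nil => exact absurd hw hv
  | @cons _ u _ hadj q =>
    refine ⟨u, hadj, le_antisymm ?_ (fsetDist_le_fsetDist_add_one hadj.symm)⟩
    have := (fsetDist_le_dist (G := G) (v := u) hw).trans (dist_le q)
    rw [Walk.length_cons] at hp
    omega

lemma exists_fsetDist_eq_of_le (hG : G.Connected) (hP : P.Nonempty) {j : ℕ}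
    (hj : j ≤ fsetDist G v P) : ∃ w, fsetDist G w P = j := by
  induction h : fsetDist G v P - j generalizing v with
  | zero => exact ⟨v, by omega⟩
  | succ k ih =>
    have hv : v ∉ P := fun hv => by rw [fsetDist_eq_zero_of_mem hv] at h; omega
    obtain ⟨u, -, hu⟩ := exists_adj_fsetDist_add_one_eq hG hP hv
    exact ih (v := u) (by omega) (by omega)

variable [Fintype V] [DecidableEq V]

lemma fsetDist_le_card_compl (hG : G.Connected) (hP : P.Nonempty) (v : V) :
    fsetDist G v P ≤ #Pᶜ := by
  have hsub : Icc 1 (fsetDist G v P) ⊆ Pᶜ.image (fsetDist G · P) := by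
    intro j hj
    rw [mem_Icc] at hj
    obtain ⟨w, hw⟩ := exists_fsetDist_eq_of_le hG hP hj.2
    refine mem_image.mpr ⟨w, mem_compl.mpr fun hwP => ?_, hw⟩
    rw [fsetDist_eq_zero_of_mem hwP] at hw
    omega
  simpa using (card_le_card hsub).trans card_image_le

lemma adj_iff_of_injOn_fsetDist (hG : G.Connected) (hP : P.Nonempty)
    (hinj : Set.InjOn (fsetDist G · P) ↑Pᶜ) (hu : u ∉ P) (hv : v ∉ P) :
    G.Adj u v ↔ fsetDist G u P + 1 = fsetDist G v P ∨ fsetDist G v P + 1 = fsetDist G u P := by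
  have descend : ∀ {u v}, u ∉ P → v ∉ P → fsetDist G v P + 1 = fsetDist G u P → G.Adj u v := by
    intro u v hu hv h
    obtain ⟨w, hadj, hw⟩ := exists_adj_fsetDist_add_one_eq hG hP hu
    have hwP : w ∉ P := fun hwP => by
      rw [fsetDist_eq_zero_of_mem hwP] at hw
      have := fsetDist_pos hG hP hv
      omega
    rwa [← hinj (by simpa using hwP) (by simpa using hv) (show fsetDist G w P = fsetDist G v P by omega)]
  refine ⟨fun hadj => ?_, ?_⟩
  · have := fsetDist_le_fsetDist_add_one (P := P) hadj
    have := fsetDist_le_fsetDist_add_one (P := P) hadj.symm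
    have := hinj.ne (by simpa using hu) (by simpa using hv) hadj.ne
    omega
  · rintro (h | h)
    · exact (descend hv hu h).symm
    · exact descend hu hv h

lemma adj_iff_of_mem_of_notMem (hG : G.Connected) (hinj : Set.InjOn (fsetDist G · P) ↑Pᶜ)
    (hu : u ∈ P) (hv : v ∉ P) :
    G.Adj u v ↔ fsetDist G u Pᶜ = 1 ∧ fsetDist G v P = 1 := by
  refine ⟨fun hadj => ⟨fsetDist_eq_one_of_adj hG hadj (by simpa using hu) (by simpa using hv),
    fsetDist_eq_one_of_adj hG hadj.symm hv hu⟩, fun ⟨hu1, hv1⟩ => ?_⟩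
  obtain ⟨w, hw, hd⟩ := exists_mem_dist_eq_fsetDist (G := G) ⟨v, mem_compl.mpr hv⟩ u
  have hadj : G.Adj u w := dist_eq_one_iff_adj.mp (hd.trans hu1)
  have hwP : w ∉ P := mem_compl.mp hw
  rwa [← hinj (by simpa using hwP) (by simpa using hv)
    ((fsetDist_eq_one_of_adj hG hadj.symm hwP hu).trans hv1.symm)]

end fsetDist

section resolvingPartition

variable [Fintype V] [DecidableEq V] {G : SimpleGraph V}

lemma nonempty_iso_pathGraph_of_injOn_fsetDist (hG : G.Connected) {A : Finset V}
    (hA : A.Nonempty) (hAc : Aᶜ.Nonempty) (hinj : Set.InjOn (fsetDist G · A) ↑Aᶜ)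
    (hinjc : Set.InjOn (fsetDist G · Aᶜ) ↑A) :
    Nonempty (G ≃g pathGraph (Fintype.card V)) := by
  have hinjc' : Set.InjOn (fsetDist G · Aᶜ) ↑Aᶜᶜ := by rwa [compl_compl]
  have hcard : #A + #Aᶜ = Fintype.card V := card_add_card_compl A
  have hApos : 0 < #A := hA.card_pos
  have hboundA : ∀ v ∈ A, 0 < fsetDist G v Aᶜ ∧ fsetDist G v Aᶜ ≤ #A := fun v hv =>
    ⟨fsetDist_pos hG hAc (by simpa using hv), by simpa using fsetDist_le_card_compl hG hAc v⟩
  have hboundAc : ∀ v ∉ A, 0 < fsetDist G v A ∧ fsetDist G v A ≤ #Aᶜ := fun v hv =>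
    ⟨fsetDist_pos hG hA hv, fsetDist_le_card_compl hG hA v⟩
  refine nonempty_iso_pathGraph_of_adj_iff
    (fun v => if v ∈ A then #A - fsetDist G v Aᶜ else #A - 1 + fsetDist G v A) ?_ ?_ ?_
  · intro u v h
    by_cases hu : u ∈ A <;> by_cases hv : v ∈ A <;> simp only [hu, hv, if_true, if_false] at h
    · have := hboundA u hu; have := hboundA v hv
      exact hinjc hu hv (by simp only; omega)
    · have := hboundA u hu; have := hboundAc v hv; omega
    · have := hboundAc u hu; have := hboundA v hv; omega
    · have := hboundAc u hu; have := hboundAc v hv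
      exact hinj (by simpa using hu) (by simpa using hv) (by simp only; omega)
  · intro v
    by_cases hv : v ∈ A <;> simp only [hv, if_true, if_false]
    · have := hboundA v hv; omega
    · have := hboundAc v hv; omega
  · intro u v
    by_cases hu : u ∈ A <;> by_cases hv : v ∈ A <;> simp only [hu, hv, if_true, if_false]
    · rw [adj_iff_of_injOn_fsetDist hG hAc hinjc' (by simpa using hu) (by simpa using hv)]
      have := hboundA u hu; have := hboundA v hv; omega
    · rw [adj_iff_of_mem_of_notMem hG hinj hu hv]
      have := hboundA u hu; have := hboundAc v hv; omega
    · rw [adj_comm, adj_iff_of_mem_of_notMem hG hinj hv hu]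
      have := hboundAc u hu; have := hboundA v hv; omega
    · rw [adj_iff_of_injOn_fsetDist hG hA hinj hu hv]
      have := hboundAc u hu; have := hboundAc v hv; omega

lemma Finpartition.exists_parts_eq_pair_compl (Pt : Finpartition (univ : Finset V))
    (h : #Pt.parts = 2) : ∃ A : Finset V, A.Nonempty ∧ Aᶜ.Nonempty ∧ Pt.parts = {A, Aᶜ} := by
  obtain ⟨A, B, hAB, hparts⟩ := card_eq_two.mp h
  have hA : A ∈ Pt.parts := by simp [hparts]
  have hB : B ∈ Pt.parts := by simp [hparts]
  have hsup : A ⊔ B = ⊤ := by simpa [hparts] using Pt.sup_parts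
  obtain rfl : Aᶜ = B := IsCompl.compl_eq ⟨Pt.disjoint hA hB hAB, codisjoint_iff.mpr hsup⟩
  exact ⟨A, Pt.nonempty_of_mem_parts hA, Pt.nonempty_of_mem_parts hB, hparts⟩

variable {Pt : Finpartition (univ : Finset V)}

lemma IsResolvingPartition.injOn_fsetDist (hres : IsResolvingPartition G Pt) {A B : Finset V}
    (hparts : Pt.parts = {A, B}) : Set.InjOn (fsetDist G · A) ↑B := by
  intro u hu v hv huv
  by_contra hne
  obtain ⟨P, hP, hd⟩ := hres u v hne
  rw [hparts, mem_insert, mem_singleton] at hP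
  rcases hP with rfl | rfl
  · exact hd huv
  · exact hd (by rw [fsetDist_eq_zero_of_mem hu, fsetDist_eq_zero_of_mem hv])

lemma IsResolvingPartition.nonempty_iso_pathGraph (hG : G.Connected)
    (hres : IsResolvingPartition G Pt) (h : #Pt.parts = 2) :
    Nonempty (G ≃g pathGraph (Fintype.card V)) := by
  obtain ⟨A, hA, hAc, hparts⟩ := Pt.exists_parts_eq_pair_compl h
  exact nonempty_iso_pathGraph_of_injOn_fsetDist hG hA hAc (hres.injOn_fsetDist hparts)
    (hres.injOn_fsetDist (hparts.trans (pair_comm _ _)))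

lemma IsResolvingPartition.two_le_card_parts (hres : IsResolvingPartition G Pt)
    (hV : 2 ≤ Fintype.card V) : 2 ≤ #Pt.parts := by
  obtain ⟨u, v, huv⟩ := Fintype.exists_pair_of_one_lt_card hV
  obtain ⟨P, hP, hd⟩ := hres u v huv
  by_contra! hlt
  have hpart : ∀ w, Pt.part w = P := fun w =>
    card_le_one.mp (by omega) _ (Pt.part_mem.mpr (mem_univ w)) _ hP
  apply hd
  rw [fsetDist_eq_zero_of_mem (hpart u ▸ Pt.mem_part (mem_univ u)),
    fsetDist_eq_zero_of_mem (hpart v ▸ Pt.mem_part (mem_univ v))]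

lemma exists_isResolvingPartition_card_two_of_injective_dist (hV : 2 ≤ Fintype.card V) {x : V}
    (hx : (G.dist · x).Injective) :
    ∃ Pt : Finpartition (univ : Finset V), #Pt.parts = 2 ∧ IsResolvingPartition G Pt := by
  have hxc : ({x}ᶜ : Finset V) ≠ ⊥ := by
    rw [bot_eq_empty, ← nonempty_iff_ne_empty, ← card_pos, card_compl, card_singleton]
    omega
  refine ⟨(Finpartition.indiscrete (singleton_ne_empty x)).extend hxc disjoint_compl_right
    (sup_compl_eq_top.trans top_eq_univ), ?_, fun u v huv => ⟨{x}, by simp, ?_⟩⟩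
  · simpa using card_pair (ne_of_mem_of_not_mem' (mem_singleton_self x) (by simp)).symm
  · simpa [fsetDist_singleton] using hx.ne huv

lemma exists_isResolvingPartition_card_two_of_iso_pathGraph (hV : 2 ≤ Fintype.card V)
    (e : G ≃g pathGraph (Fintype.card V)) :
    ∃ Pt : Finpartition (univ : Finset V), #Pt.parts = 2 ∧ IsResolvingPartition G Pt := by
  have hn : 0 < Fintype.card V := by omega
  have hdist : ∀ v, G.dist v (e.symm ⟨0, hn⟩) = e v := fun v => by
    rw [← e.dist_apply, e.apply_symm_apply, dist_comm, pathGraph_dist_zero_left]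
  exact exists_isResolvingPartition_card_two_of_injective_dist hV (x := e.symm ⟨0, hn⟩)
    fun u v h => e.injective (Fin.ext (by simpa only [hdist] using h))

end resolvingPartition

theorem stmt14 [Fintype V] [DecidableEq V] (G : SimpleGraph V) (hG : G.Connected)
    (hn : 2 ≤ Fintype.card V) :
    partitionDim G = 2 ↔ Nonempty (G ≃g pathGraph (Fintype.card V)) := by
  let S := {m | ∃ Pt : Finpartition (univ : Finset V), #Pt.parts = m ∧ IsResolvingPartition G Pt}
  have hS : partitionDim G = sInf S := rfl
  constructor
  · intro h
    have hmem := Nat.sInf_mem (s := S) (Nat.nonempty_of_pos_sInf (by omega))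
    rw [← hS, h] at hmem
    obtain ⟨Pt, hcard, hres⟩ := hmem
    exact hres.nonempty_iso_pathGraph hG hcard
  · rintro ⟨e⟩
    obtain ⟨Pt, hcard, hres⟩ := exists_isResolvingPartition_card_two_of_iso_pathGraph hn e
    refine le_antisymm (Nat.sInf_le ⟨Pt, hcard, hres⟩) (le_csInf ⟨2, Pt, hcard, hres⟩ ?_)
    rintro m ⟨Pt', rfl, hres'⟩
    exact hres'.two_le_card_parts hn
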